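/- Let d ≥ 2 and p > p_c(d). For each unit coordinate vector e, define n(ω) = min{k > 0 : ke ∈ C∞(ω)} (which is finite for ℙ_0-a.e. ω) and the induced shift σ_e : Ω_0 → Ω_0 by σ_e(ω) = τ_{n(ω)e} ω. Then σ_e preserves the measure ℙ_0 and is ergodic with respect to ℙ_0. -/

import Mathlib

open MeasureTheory ProbabilityTheory Filter Topology
open scoped ENNReal symmDiff

noncomputable section

namespace QIP

abbrev Site (d : ℕ) := Fin d → ℤ
abbrev Edge (d : ℕ) := Site d × Fin d
abbrev Config (d : ℕ) := Edge d → Bool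

/-- The unit coordinate vector in direction `i`. -/
def unitVec (d : ℕ) (i : Fin d) : Site d := Pi.single i 1

/-- The 2d unit vectors: `(i, true)` is `+e_i`, `(i, false)` is `-e_i`. -/
def dirVec (d : ℕ) (u : Fin d × Bool) : Site d :=
  if u.2 then unitVec d u.1 else -unitVec d u.1

/-- The edge incident to `x` in direction `u`. -/
def edgeAt (d : ℕ) (x : Site d) (u : Fin d × Bool) : Edge d :=
  if u.2 then (x, u.1) else (x - unitVec d u.1, u.1)

/-- The edge incident to `x` in direction `u` is occupied in `ω`. -/
def occStep (d : ℕ) (ω : Config d) (x : Site d) (u : Fin d × Bool) : Prop :=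
  ω (edgeAt d x u) = true

instance (d : ℕ) (ω : Config d) (x : Site d) (u : Fin d × Bool) :
    Decidable (occStep d ω x u) := by unfold occStep; infer_instance

/-- The shift `τ_x` on configurations: `(τ_x ω)_b = ω_{x+b}`. -/
def shift (d : ℕ) (x : Site d) (ω : Config d) : Config d :=
  fun e => ω (x + e.1, e.2)

/-- `y` is a neighbour of `x` joined to it by an occupied edge. -/
def occAdj (d : ℕ) (ω : Config d) (x y : Site d) : Prop :=
  ∃ u : Fin d × Bool, y = x + dirVec d u ∧ occStep d ω x u

/-- The occupied cluster of `x`. -/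
def cluster (d : ℕ) (ω : Config d) (x : Site d) : Set (Site d) :=
  {y | Relation.ReflTransGen (occAdj d ω) x y}

/-- `x` belongs to an infinite occupied cluster. -/
def inInfCluster (d : ℕ) (ω : Config d) (x : Site d) : Prop :=
  (cluster d ω x).Infinite

/-- The event that the origin lies in an infinite cluster. -/
def Omega0 (d : ℕ) : Set (Config d) := {ω | inInfCluster d ω 0}

/-- `μ` is i.i.d. Bernoulli(p) bond percolation on `ℤ^d`. -/
def IsBernoulli (d : ℕ) (p : ℝ) (μ : Measure (Config d)) : Prop :=
  IsProbabilityMeasure μ ∧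
  ∀ (s : Finset (Edge d)) (f : Edge d → Bool),
    μ {ω | ∀ e ∈ s, ω e = f e}
      = ∏ e ∈ s, (if f e then ENNReal.ofReal p else ENNReal.ofReal (1 - p))

/-- The critical probability `p_c(d)`. -/
def pc (d : ℕ) : ℝ :=
  sInf {p : ℝ | ∃ μ : Measure (Config d), IsBernoulli d p μ ∧ 0 < μ (Omega0 d)}

/-- The conditional measure `ℙ_0 = ℙ(·|0 ∈ C∞)`. -/
def P0 (d : ℕ) (μ : Measure (Config d)) : Measure (Config d) :=
  ProbabilityTheory.cond μ (Omega0 d)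

open Classical in
/-- Transition probabilities of the lazy walk on the cluster. -/
def transP (d : ℕ) (ω : Config d) (x y : Site d) : ℝ :=
  (1 / (2 * (d : ℝ))) * ∑ u : Fin d × Bool,
    (if (y = x + dirVec d u ∧ occStep d ω x u) ∨ (y = x ∧ ¬ occStep d ω x u) then 1 else 0)

/-- `P` is the law of the lazy simple random walk on `C∞(ω)` started at `0`. -/
def IsWalkLaw (d : ℕ) (ω : Config d) (P : Measure (ℕ → Site d)) : Prop :=
  IsProbabilityMeasure P ∧
  ∀ (n : ℕ) (x : ℕ → Site d),
    P {X | ∀ k ≤ n, X k = x k}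
      = ENNReal.ofReal ((if x 0 = 0 then (1:ℝ) else 0) *
          ∏ k ∈ Finset.range n, transP d ω (x k) (x (k+1)))

open Classical in
/-- The Markov operator `Q` of the environment chain (acting componentwise). -/
def Qop {E : Type*} [AddCommMonoid E] [Module ℝ E] (d : ℕ)
    (f : Config d → E) (ω : Config d) : E :=
  (1 / (2 * (d : ℝ))) • ∑ u : Fin d × Bool,
    (if occStep d ω 0 u then f (shift d (dirVec d u) ω) else f ω)

/-- Embedding of `ℤ^d` into `ℝ^d`. -/
def toR (d : ℕ) (x : Site d) : Fin d → ℝ := fun j => (x j : ℝ)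

open Classical in
/-- The local drift `V` at the origin. -/
def Vdrift (d : ℕ) (ω : Config d) : Fin d → ℝ :=
  (1 / (2 * (d : ℝ))) • ∑ u : Fin d × Bool,
    (if occStep d ω 0 u then toR d (dirVec d u) else 0)

/-- Squared Euclidean norm on `ℝ^d`. -/
def norm2 (d : ℕ) (v : Fin d → ℝ) : ℝ := ∑ j, (v j) ^ 2

/-- Euclidean norm on `ℝ^d`. -/
def eucNorm (d : ℕ) (v : Fin d → ℝ) : ℝ := Real.sqrt (norm2 d v)

/-- `ψ` is a solution of `(1 + ε - Q) ψ = V` in `L²(μ; ℝ^d)`. -/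
def IsPsiSol (d : ℕ) (μ : Measure (Config d)) (ε : ℝ)
    (ψ : Config d → Fin d → ℝ) : Prop :=
  Measurable ψ ∧ MemLp ψ 2 μ ∧
  ∀ᵐ ω ∂μ, (1 + ε) • ψ ω - Qop d ψ ω = Vdrift d ω

open Classical in
/-- `χ` is the corrector: the `L²(ℙ_0)`-limit of `1_{x ∈ C∞} (ψ_ε ∘ τ_x - ψ_ε)` as `ε ↓ 0`. -/
def IsCorrector (d : ℕ) (μ : Measure (Config d))
    (χ : Site d → Config d → Fin d → ℝ) : Prop :=
  ∀ (x : Site d) (ψ : ℝ → Config d → Fin d → ℝ),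
    (∀ ε > 0, IsPsiSol d μ ε (ψ ε)) →
    Tendsto (fun ε => ∫ ω, norm2 d
        ((fun j => if inInfCluster d ω x then ψ ε (shift d x ω) j - ψ ε ω j else 0)
          - χ x ω) ∂μ)
      (𝓝[>] (0:ℝ)) (𝓝 0)

/-- The induced shift `σ_e(ω) = τ_{n(ω) e} ω`, where `n(ω) = min{k > 0 : k e ∈ C∞(ω)}`. -/
def inducedShift (d : ℕ) (u : Fin d × Bool) (ω : Config d) : Config d :=
  shift d (((sInf {k : ℕ | 0 < k ∧ inInfCluster d ω ((k : ℤ) • dirVec d u)} : ℕ) : ℤ)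
    • dirVec d u) ω

variable {d : ℕ}

/-! ### Basic lemmas -/

variable {d : ℕ}

lemma shift_shift (x y : Site d) (ω : Config d) :
    shift d x (shift d y ω) = shift d (x + y) ω := by
  funext e
  simp only [shift]
  congr 2
  abel

@[fun_prop]
lemma measurable_shift (x : Site d) : Measurable (shift d x) :=
  measurable_pi_lambda _ fun e => measurable_pi_apply _

lemma shift_zero (ω : Config d) : shift d 0 ω = ω := by
  funext e; simp [shift]

lemma edgeAt_add (x a : Site d) (u : Fin d × Bool) :
    edgeAt d (x + a) u = (x + (edgeAt d a u).1, (edgeAt d a u).2) := by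
  unfold edgeAt
  by_cases h : u.2 <;> simp [h, add_sub_assoc]

lemma occStep_shift (x a : Site d) (ω : Config d) (u : Fin d × Bool) :
    occStep d (shift d x ω) a u ↔ occStep d ω (x + a) u := by
  unfold occStep shift
  rw [edgeAt_add]

lemma occAdj_shift (x a b : Site d) (ω : Config d) :
    occAdj d (shift d x ω) a b ↔ occAdj d ω (x + a) (x + b) := by
  unfold occAdj
  refine exists_congr fun v => ?_
  rw [occStep_shift, add_assoc]
  constructor
  · rintro ⟨rfl, h⟩; exact ⟨rfl, h⟩
  · rintro ⟨h1, h2⟩; exact ⟨by exact add_left_cancel h1, h2⟩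

lemma mem_cluster_shift (x z y : Site d) (ω : Config d) :
    y ∈ cluster d (shift d x ω) z ↔ x + y ∈ cluster d ω (x + z) := by
  constructor
  · intro h
    exact Relation.ReflTransGen.lift (fun w => x + w)
      (fun a b hab => (occAdj_shift x a b ω).1 hab) _ _ h
  · intro h
    have := Relation.ReflTransGen.lift (fun w => -x + w)
      (fun a b hab => by
        have : occAdj d (shift d x ω) (-x + a) (-x + b) ↔ occAdj d ω a b := by
          rw [occAdj_shift]; simp
        exact this.2 hab) _ _ h
    simpa [Function.onFun, cluster] using this

lemma cluster_shift_image (x z : Site d) (ω : Config d) :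
    cluster d ω (x + z) = (fun y => x + y) '' cluster d (shift d x ω) z := by
  ext w
  constructor
  · intro hw
    exact ⟨-x + w, by rw [mem_cluster_shift]; simpa using hw, by simp⟩
  · rintro ⟨y, hy, rfl⟩
    exact (mem_cluster_shift x z y ω).1 hy

lemma inInfCluster_shift (x z : Site d) (ω : Config d) :
    inInfCluster d (shift d x ω) z ↔ inInfCluster d ω (x + z) := by
  unfold inInfCluster
  rw [cluster_shift_image x z ω]
  exact (Set.infinite_image_iff (Set.injOn_of_injective (add_right_injective x))).symm

lemma mem_Omega0_shift (x : Site d) (ω : Config d) :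
    shift d x ω ∈ Omega0 d ↔ inInfCluster d ω x := by
  unfold Omega0
  rw [Set.mem_setOf_eq, inInfCluster_shift, add_zero]

/-! ### Measurability -/

lemma measurableSet_occStep (a : Site d) (v : Fin d × Bool) :
    MeasurableSet {ω : Config d | occStep d ω a v} := by
  have : {ω : Config d | occStep d ω a v}
      = (fun ω : Config d => ω (edgeAt d a v)) ⁻¹' {true} := rfl
  rw [this]
  exact
  measurable_pi_apply (edgeAt d a v) (measurableSet_singleton true)

lemma measurableSet_occAdj (a b : Site d) :
    MeasurableSet {ω : Config d | occAdj d ω a b} := by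
  have : {ω : Config d | occAdj d ω a b}
      = ⋃ v : Fin d × Bool, {ω | b = a + dirVec d v} ∩ {ω | occStep d ω a v} := by
    ext ω; simp [occAdj, Set.mem_iUnion, Set.mem_inter_iff]
  rw [this]
  refine MeasurableSet.iUnion fun v => ?_
  by_cases h : b = a + dirVec d v
  · simpa [h] using measurableSet_occStep a v
  · simp [h]

lemma measurableSet_chain (l : List (Site d)) (a : Site d) :
    MeasurableSet {ω : Config d | List.Chain (occAdj d ω) a l} := by
  induction l generalizing a with
  | nil => simp [List.Chain]
  | cons b l ih =>
      have : {ω : Config d | List.Chain (occAdj d ω) a (b :: l)}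
          = {ω | occAdj d ω a b} ∩ {ω | List.Chain (occAdj d ω) b l} := by
        ext ω; simp [List.Chain, List.chain_cons]
      rw [this]
      exact (measurableSet_occAdj a b).inter (ih b)

lemma measurableSet_mem_cluster (z y : Site d) :
    MeasurableSet {ω : Config d | y ∈ cluster d ω z} := by
  have : {ω : Config d | y ∈ cluster d ω z}
      = ⋃ l : List (Site d),
          {ω | List.Chain (occAdj d ω) z l} ∩
            {ω | List.getLast (z :: l) (List.cons_ne_nil _ _) = y} := by
    ext ω
    simp only [Set.mem_setOf_eq, Set.mem_iUnion, Set.mem_inter_iff]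
    constructor
    · intro h
      obtain ⟨l, h1, h2⟩ := List.exists_isChain_cons_of_relationReflTransGen h
      exact ⟨l, h1, h2⟩
    · rintro ⟨l, h1, h2⟩
      exact List.relationReflTransGen_of_exists_isChain_cons l h1 h2
  rw [this]
  refine MeasurableSet.iUnion fun l => ?_
  by_cases h : List.getLast (z :: l) (List.cons_ne_nil _ _) = y
  · simpa [h] using measurableSet_chain l z
  · simp [h]

lemma measurableSet_inInfCluster (z : Site d) :
    MeasurableSet {ω : Config d | inInfCluster d ω z} := by
  have : {ω : Config d | inInfCluster d ω z}
      = ⋂ F : Finset (Site d), ⋃ y : Site d,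
          {ω | y ∈ cluster d ω z} ∩ {ω | y ∉ F} := by
    ext ω
    simp only [Set.mem_setOf_eq, Set.mem_iInter, Set.mem_iUnion, Set.mem_inter_iff]
    constructor
    · intro h F
      obtain ⟨y, hy, hyF⟩ := Set.not_subset.1 fun hsub => h (Set.Finite.subset F.finite_toSet hsub)
      exact ⟨y, hy, hyF⟩
    · intro h hfin
      obtain ⟨y, hy, hyF⟩ := h hfin.toFinset
      exact hyF (by simpa using hy)
  rw [this]
  exact MeasurableSet.iInter fun F => MeasurableSet.iUnion fun y => by
    by_cases h : y ∈ F
    · simp [h]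
    · simpa [h] using measurableSet_mem_cluster z y

lemma measurableSet_Omega0 : MeasurableSet (Omega0 d) :=
  measurableSet_inInfCluster 0


/-! ### Induced shift and return time -/

variable {u : Fin d × Bool}

/-- The return time. -/
def Nt (d : ℕ) (u : Fin d × Bool) (ω : Config d) : ℕ :=
  sInf {k : ℕ | 0 < k ∧ inInfCluster d ω ((k : ℤ) • dirVec d u)}

lemma shift_iterate (v : Site d) (k : ℕ) (ω : Config d) :
    (shift d v)^[k] ω = shift d (k • v) ω := by
  induction k with
  | zero => simp [shift_zero]
  | succ n ih =>
      rw [Function.iterate_succ_apply', ih, shift_shift, succ_nsmul']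

lemma iterate_mem_Omega0 (k : ℕ) (ω : Config d) :
    (shift d (dirVec d u))^[k] ω ∈ Omega0 d ↔ inInfCluster d ω ((k : ℤ) • dirVec d u) := by
  rw [shift_iterate, mem_Omega0_shift, natCast_zsmul]

lemma Nt_eq_sInf (ω : Config d) :
    Nt d u ω = sInf {k : ℕ | 0 < k ∧ (shift d (dirVec d u))^[k] ω ∈ Omega0 d} := by
  unfold Nt
  congr 1
  ext k
  simp only [Set.mem_setOf_eq, iterate_mem_Omega0]

lemma inducedShift_eq (ω : Config d) :
    inducedShift d u ω = (shift d (dirVec d u))^[Nt d u ω] ω := by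
  rw [shift_iterate, inducedShift, natCast_zsmul]; rfl

lemma measurable_Nt : Measurable (Nt d u) := by
  apply measurable_to_countable'
  intro m
  have hE : ∀ k : ℕ, MeasurableSet {ω : Config d | inInfCluster d ω ((k : ℤ) • dirVec d u)} :=
    fun k => measurableSet_inInfCluster _
  rcases Nat.eq_zero_or_pos m with rfl | hm
  · have : (Nt d u) ⁻¹' {0}
        = ⋂ k : ℕ, {ω : Config d | 0 < k → ¬ inInfCluster d ω ((k : ℤ) • dirVec d u)} := by
      ext ω
      simp only [Set.mem_preimage, Set.mem_singleton_iff, Set.mem_iInter, Set.mem_setOf_eq]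
      constructor
      · intro h k hk hin
        have h0 : sInf {k : ℕ | 0 < k ∧ inInfCluster d ω ((k : ℤ) • dirVec d u)} = 0 := h
        rcases Nat.sInf_eq_zero.1 h0 with h' | h'
        · exact absurd h'.1 (lt_irrefl 0)
        · have : k ∈ {k : ℕ | 0 < k ∧ inInfCluster d ω ((k : ℤ) • dirVec d u)} := ⟨hk, hin⟩
          rw [h'] at this
          exact this
      · intro h
        apply Nat.sInf_eq_zero.2
        right
        ext k
        simp only [Set.mem_setOf_eq, Set.mem_empty_iff_false, iff_false, not_and]
        exact h k
    rw [this]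
    refine MeasurableSet.iInter fun k => ?_
    rcases Nat.eq_zero_or_pos k with rfl | hk
    · simp
    · have : {ω : Config d | 0 < k → ¬ inInfCluster d ω ((k : ℤ) • dirVec d u)}
          = {ω : Config d | inInfCluster d ω ((k : ℤ) • dirVec d u)}ᶜ := by
        ext ω; simp [hk]
      rw [this]; exact (hE k).compl
  · have : (Nt d u) ⁻¹' {m}
        = ({ω : Config d | inInfCluster d ω ((m : ℤ) • dirVec d u)} ∩
            ⋂ j : ℕ, {ω : Config d | j < m → 0 < j → ¬ inInfCluster d ω ((j : ℤ) • dirVec d u)}) := by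
      ext ω
      set S := {k : ℕ | 0 < k ∧ inInfCluster d ω ((k : ℤ) • dirVec d u)} with hS
      simp only [Set.mem_preimage, Set.mem_singleton_iff, Set.mem_inter_iff, Set.mem_iInter,
        Set.mem_setOf_eq]
      constructor
      · intro h
        have hmem : m ∈ S := by
          rw [← h]
          apply Nat.sInf_mem
          rw [Set.nonempty_def]
          by_contra hne
          push_neg at hne
          have : S = ∅ := Set.eq_empty_iff_forall_notMem.2 hne
          rw [Nt, ← hS, this] at h
          simp [Nat.sInf_empty] at h
          omega
        refine ⟨hmem.2, fun j hj hj0 hin => ?_⟩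
        have : j ∈ S := ⟨hj0, hin⟩
        have := Nat.sInf_le this
        rw [Nt, ← hS] at h
        omega
      · rintro ⟨hin, hbelow⟩
        have hmem : m ∈ S := ⟨hm, hin⟩
        have h1 : sInf S ≤ m := Nat.sInf_le hmem
        have h2 : ¬ sInf S < m := by
          intro hlt
          have hne : S.Nonempty := ⟨m, hmem⟩
          have := Nat.sInf_mem hne
          exact hbelow (sInf S) hlt this.1 this.2
        have : sInf S = m := by omega
        exact this
    rw [this]
    refine (hE m).inter (MeasurableSet.iInter fun j => ?_)
    by_cases h1 : j < m
    · by_cases h2 : 0 < j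
      · have : {ω : Config d | j < m → 0 < j → ¬ inInfCluster d ω ((j : ℤ) • dirVec d u)}
            = {ω : Config d | inInfCluster d ω ((j : ℤ) • dirVec d u)}ᶜ := by
          ext ω; simp [h1, h2]
        rw [this]; exact (hE j).compl
      · have : {ω : Config d | j < m → 0 < j → ¬ inInfCluster d ω ((j : ℤ) • dirVec d u)}
            = Set.univ := by
          ext ω; simp at h2; simp [h2]
        rw [this]; exact MeasurableSet.univ
    · have : {ω : Config d | j < m → 0 < j → ¬ inInfCluster d ω ((j : ℤ) • dirVec d u)}
          = Set.univ := by
        ext ω; simp [h1]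
      rw [this]; exact MeasurableSet.univ

lemma measurable_inducedShift : Measurable (inducedShift d u) := by
  apply measurable_pi_lambda
  intro e
  apply measurable_to_countable'
  intro b
  have : (fun ω : Config d => inducedShift d u ω e) ⁻¹' {b}
      = ⋃ m : ℕ, (Nt d u ⁻¹' {m}) ∩
          ((fun ω : Config d => ω ((m : ℤ) • dirVec d u + e.1, e.2)) ⁻¹' {b}) := by
    ext ω
    simp only [Set.mem_preimage, Set.mem_singleton_iff, Set.mem_iUnion, Set.mem_inter_iff]
    constructor
    · intro h
      exact ⟨Nt d u ω, rfl, by rw [← h]; rfl⟩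
    · rintro ⟨m, hm, hb⟩
      rw [show inducedShift d u ω e = ω ((Nt d u ω : ℤ) • dirVec d u + e.1, e.2) from rfl, hm]
      exact hb
  -- measurability
  have h2 : ∀ m : ℕ, MeasurableSet
      ((fun ω : Config d => ω ((m : ℤ) • dirVec d u + e.1, e.2)) ⁻¹' {b}) :=
    fun m => measurable_pi_apply _ (measurableSet_singleton b)
  rw [this]
  exact MeasurableSet.iUnion fun m => (measurable_Nt (measurableSet_singleton m)).inter (h2 m)



/-! ### Cylinder sets and the Bernoulli measure -/

def cyl (d : ℕ) (s : Finset (Edge d)) (f : Edge d → Bool) : Set (Config d) :=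
  {ω | ∀ e ∈ s, ω e = f e}

def cylSetsIn (d : ℕ) (F : Finset (Edge d)) : Set (Set (Config d)) :=
  {S | ∃ s : Finset (Edge d), s ⊆ F ∧ ∃ f : Edge d → Bool, S = cyl d s f}

def cylSets (d : ℕ) : Set (Set (Config d)) :=
  {S | ∃ s : Finset (Edge d), ∃ f : Edge d → Bool, S = cyl d s f}

def mF (d : ℕ) (F : Finset (Edge d)) : MeasurableSpace (Config d) :=
  MeasurableSpace.generateFrom (cylSetsIn d F)

lemma measurableSet_cyl (s : Finset (Edge d)) (f : Edge d → Bool) :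
    MeasurableSet (cyl d s f) := by
  have : cyl d s f = ⋂ e ∈ (s : Set (Edge d)), (fun ω : Config d => ω e) ⁻¹' {f e} := by
    ext ω
    simp only [cyl, Set.mem_setOf_eq, Set.mem_iInter, Set.mem_preimage, Set.mem_singleton_iff,
      Finset.mem_coe]
  rw [this]
  exact MeasurableSet.biInter s.countable_toSet
    (fun e _ => measurable_pi_apply e (measurableSet_singleton (f e)))

lemma cyl_inter_of_disjoint {s t : Finset (Edge d)} (h : Disjoint s t)
    (f g : Edge d → Bool) [DecidablePred (· ∈ s)] :
    cyl d s f ∩ cyl d t g = cyl d (s ∪ t) (fun e => if e ∈ s then f e else g e) := by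
  ext ω
  simp only [cyl, Set.mem_inter_iff, Set.mem_setOf_eq, Finset.mem_union]
  constructor
  · rintro ⟨h1, h2⟩ e he
    rcases he with he | he
    · simp [he, h1 e he]
    · have : e ∉ s := fun hs => (Finset.disjoint_left.1 h) hs he
      simp [this, h2 e he]
  · intro hh
    constructor
    · intro e he
      have := hh e (Or.inl he); simpa [he] using this
    · intro e he
      have hns : e ∉ s := fun hs => (Finset.disjoint_left.1 h) hs he
      have := hh e (Or.inr he); simpa [hns] using this

lemma cyl_inter_of_nonempty {s t : Finset (Edge d)} (f g : Edge d → Bool)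
    [DecidablePred (· ∈ s)]
    (h : (cyl d s f ∩ cyl d t g).Nonempty) :
    cyl d s f ∩ cyl d t g = cyl d (s ∪ t) (fun e => if e ∈ s then f e else g e) := by
  obtain ⟨ω₀, h₀s, h₀t⟩ := h
  ext ω
  simp only [cyl, Set.mem_inter_iff, Set.mem_setOf_eq, Finset.mem_union]
  constructor
  · rintro ⟨h1, h2⟩ e he
    rcases he with he | he
    · simp [he, h1 e he]
    · by_cases hs : e ∈ s
      · simpa [hs] using h1 e hs
      · simp [hs, h2 e he]
  · intro hh
    constructor
    · intro e he
      have := hh e (Or.inl he); simpa [he] using this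
    · intro e he
      by_cases hs : e ∈ s
      · have := hh e (Or.inl hs)
        simp only [hs, if_true] at this
        rw [this]
        rw [← h₀s e hs, h₀t e he]
      · have := hh e (Or.inr he); simpa [hs] using this

lemma isPiSystem_cylSets : IsPiSystem (cylSets d) := by
  rintro S ⟨s, f, rfl⟩ T ⟨t, g, rfl⟩ hne
  classical
  exact ⟨s ∪ t, _, cyl_inter_of_nonempty f g hne⟩

lemma isPiSystem_cylSetsIn (F : Finset (Edge d)) : IsPiSystem (cylSetsIn d F) := by
  rintro S ⟨s, hs, f, rfl⟩ T ⟨t, ht, g, rfl⟩ hne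
  classical
  exact ⟨s ∪ t, Finset.union_subset hs ht, _, cyl_inter_of_nonempty f g hne⟩

lemma generateFrom_cylSets :
    (MeasurableSpace.pi : MeasurableSpace (Config d))
      = MeasurableSpace.generateFrom (cylSets d) := by
  apply le_antisymm
  · have : ∀ e : Edge d, @Measurable (Config d) Bool
        (MeasurableSpace.generateFrom (cylSets d)) _ (fun ω => ω e) := by
      intro e
      apply @measurable_to_countable' Bool (Config d) _ _
        (MeasurableSpace.generateFrom (cylSets d)) _
      intro b
      have : (fun ω : Config d => ω e) ⁻¹' {b} = cyl d {e} (fun _ => b) := by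
        ext ω; simp [cyl]
      rw [this]
      exact MeasurableSpace.measurableSet_generateFrom ⟨{e}, fun _ => b, rfl⟩
    exact iSup_le fun e => measurable_iff_comap_le.mp (this e)
  · apply MeasurableSpace.generateFrom_le
    rintro S ⟨s, f, rfl⟩
    exact measurableSet_cyl s f

lemma mF_le (F : Finset (Edge d)) :
    mF d F ≤ (inferInstance : MeasurableSpace (Config d)) := by
  apply MeasurableSpace.generateFrom_le
  rintro S ⟨s, _, f, rfl⟩
  exact measurableSet_cyl s f

lemma mF_mono {F F' : Finset (Edge d)} (h : F ⊆ F') : mF d F ≤ mF d F' :=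
  MeasurableSpace.generateFrom_mono fun S => by
    rintro ⟨s, hs, f, rfl⟩; exact ⟨s, hs.trans h, f, rfl⟩

section Meas

variable {p : ℝ} {μ : Measure (Config d)}

lemma mu_cyl (hμ : IsBernoulli d p μ) (s : Finset (Edge d)) (f : Edge d → Bool) :
    μ (cyl d s f) = ∏ e ∈ s, (if f e then ENNReal.ofReal p else ENNReal.ofReal (1 - p)) :=
  hμ.2 s f

/-- the edge-translation map -/
def trE (d : ℕ) (x : Site d) (e : Edge d) : Edge d := (x + e.1, e.2)

lemma trE_inj (x : Site d) : Function.Injective (trE d x) := by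
  rintro ⟨a1, a2⟩ ⟨b1, b2⟩ h
  simp only [trE, Prod.mk.injEq] at h
  exact Prod.ext (by have := h.1; exact add_left_cancel this) h.2

lemma shift_preimage_cyl (x : Site d) (s : Finset (Edge d)) (f : Edge d → Bool) :
    shift d x ⁻¹' cyl d s f
      = cyl d (s.image (trE d x)) (fun b => f (b.1 - x, b.2)) := by
  classical
  ext ω
  simp only [cyl, Set.mem_preimage, Set.mem_setOf_eq, Finset.mem_image]
  constructor
  · rintro h b ⟨e, he, rfl⟩
    have := h e he
    simp only [shift] at this
    simpa [trE] using this
  · intro h e he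
    have := h (trE d x e) ⟨e, he, rfl⟩
    simp only [trE] at this
    simpa [shift] using this

lemma map_shift_eq (hμ : IsBernoulli d p μ) (x : Site d) : Measure.map (shift d x) μ = μ := by
  haveI : IsProbabilityMeasure μ := hμ.1
  haveI : IsProbabilityMeasure (Measure.map (shift d x) μ) :=
    Measure.isProbabilityMeasure_map (measurable_shift x).aemeasurable
  refine ext_of_generate_finite (cylSets d) generateFrom_cylSets isPiSystem_cylSets
    ?_ (by simp)
  rintro S ⟨s, f, rfl⟩
  rw [Measure.map_apply (measurable_shift x) (measurableSet_cyl s f),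
    shift_preimage_cyl, mu_cyl hμ, mu_cyl hμ]
  classical
  rw [Finset.prod_image (fun a _ b _ h => trE_inj x h)]
  apply Finset.prod_congr rfl
  intro e _
  simp [trE]

lemma measurePreserving_shift (hμ : IsBernoulli d p μ) (x : Site d) :
    MeasurePreserving (shift d x) μ μ :=
  ⟨measurable_shift x, map_shift_eq hμ x⟩

lemma indep_mF (hμ : IsBernoulli d p μ) {F F' : Finset (Edge d)} (h : Disjoint F F') :
    ProbabilityTheory.Indep (mF d F) (mF d F') μ := by
  haveI : IsProbabilityMeasure μ := hμ.1
  apply ProbabilityTheory.IndepSets.indep (mF_le F) (mF_le F')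
    (isPiSystem_cylSetsIn F) (isPiSystem_cylSetsIn F') rfl rfl
  rintro S T ⟨s, hs, f, rfl⟩ ⟨t, ht, g, rfl⟩
  classical
  have hst : Disjoint s t := h.mono hs ht
  refine Filter.Eventually.of_forall fun a => ?_
  simp only [Kernel.const_apply]
  rw [cyl_inter_of_disjoint hst, mu_cyl hμ, mu_cyl hμ, mu_cyl hμ,
    Finset.prod_union hst]
  congr 1
  · exact Finset.prod_congr rfl fun e he => by simp [he]
  · refine Finset.prod_congr rfl fun e he => ?_
    have : e ∉ s := fun hc => (Finset.disjoint_left.1 hst) hc he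
    simp [this]

lemma indep_apply (hμ : IsBernoulli d p μ) {F F' : Finset (Edge d)} (h : Disjoint F F')
    {B B' : Set (Config d)} (hB : MeasurableSet[mF d F] B) (hB' : MeasurableSet[mF d F'] B') :
    μ (B ∩ B') = μ B * μ B' := by
  have := indep_mF hμ h
  rw [ProbabilityTheory.Indep_iff] at this
  exact this B B' hB hB'

/-! ### Approximation by finitely supported sets -/

lemma approx_aux (hμ : IsBernoulli d p μ) {A : Set (Config d)} (hA : MeasurableSet A) :
    ∀ ε : ℝ≥0∞, 0 < ε → ∃ F : Finset (Edge d), ∃ B : Set (Config d),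
      MeasurableSet[mF d F] B ∧ μ (symmDiff A B) ≤ ε := by
  haveI : IsProbabilityMeasure μ := hμ.1
  have hA' : MeasurableSet[MeasurableSpace.generateFrom (cylSets d)] A :=
    generateFrom_cylSets (d := d) ▸ hA
  refine MeasurableSpace.generateFrom_induction (C := cylSets d)
    (p := fun (t : Set (Config d)) _ => ∀ ε : ℝ≥0∞, 0 < ε → ∃ F : Finset (Edge d),
      ∃ B : Set (Config d), MeasurableSet[mF d F] B ∧ μ (symmDiff t B) ≤ ε)
    ?_ ?_ ?_ ?_ A hA'
  · rintro t ⟨s, f, rfl⟩ _ ε hε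
    refine ⟨s, cyl d s f, MeasurableSpace.measurableSet_generateFrom ⟨s, subset_rfl, f, rfl⟩, ?_⟩
    simp [symmDiff_self]
  · intro ε hε
    exact ⟨∅, ∅, @MeasurableSet.empty _ (mF d ∅), by simp [symmDiff_self]⟩
  · rintro t ht iht ε hε
    obtain ⟨F, B, hB, hd⟩ := iht ε hε
    exact ⟨F, Bᶜ, hB.compl, by rwa [compl_symmDiff_compl]⟩
  · intro s hsm ihs ε hε
    by_cases hεtop : ε = ⊤
    · exact ⟨∅, ∅, @MeasurableSet.empty _ (mF d ∅), by simp [hεtop]⟩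
    -- choose n with μ((⋃ i, s i) \ Accumulate s n) ≤ ε/2
    have hsm' : ∀ n, MeasurableSet (s n) := fun n => generateFrom_cylSets (d := d) ▸ hsm n
    have hhalf : (0:ℝ≥0∞) < ε / 2 := ENNReal.div_pos hε.ne' (by norm_num)
    have key : ∃ n : ℕ, μ ((⋃ i, s i) \ Set.accumulate s n) ≤ ε / 2 := by
      set a := μ (⋃ i, s i) with ha
      have hafin : a ≠ ⊤ := measure_ne_top μ _
      have htend : Tendsto (fun n => μ (Set.accumulate s n)) atTop (𝓝 a) :=
        tendsto_measure_iUnion_accumulate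
      have : ∃ n : ℕ, a ≤ μ (Set.accumulate s n) + ε / 2 := by
        rcases eq_or_ne a 0 with ha0 | ha0
        · exact ⟨0, by rw [ha0]; exact zero_le⟩
        · have hopen : Set.Ioi (a - ε / 2) ∈ 𝓝 a := by
            apply Ioi_mem_nhds
            exact ENNReal.sub_lt_self hafin ha0 hhalf.ne'
          obtain ⟨n, hn⟩ := (htend.eventually_mem hopen).exists
          refine ⟨n, ?_⟩
          calc a ≤ (a - ε / 2) + ε / 2 := le_tsub_add
          _ ≤ μ (Set.accumulate s n) + ε / 2 := by
              exact add_le_add_left (le_of_lt hn) _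
      obtain ⟨n, hn⟩ := this
      refine ⟨n, ?_⟩
      have hacc : MeasurableSet (Set.accumulate s n) := by
        rw [Set.accumulate_def]
        exact MeasurableSet.biUnion (Set.to_countable _) fun i _ => hsm' i
      have hsub' : Set.accumulate s n ⊆ ⋃ i, s i := by
        rw [Set.accumulate_def]
        exact Set.iUnion₂_subset fun i _ => Set.subset_iUnion s i
      rw [measure_diff hsub' hacc.nullMeasurableSet (measure_ne_top μ _)]
      rw [tsub_le_iff_right]
      rw [add_comm]
      exact hn
    obtain ⟨n, hn⟩ := key
    -- approximate each piece
    have hpieces : ∀ i : ℕ, ∃ F : Finset (Edge d), ∃ B : Set (Config d),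
        MeasurableSet[mF d F] B ∧ μ (symmDiff (s i) B) ≤ (ε / 2) / (n + 1) := fun i =>
      ihs i ((ε / 2) / (n + 1)) (ENNReal.div_pos hhalf.ne' (by simp))
    choose Fi Bi hBi hdi using hpieces
    classical
    refine ⟨(Finset.range (n+1)).biUnion Fi, ⋃ i ∈ Finset.range (n+1), Bi i, ?_, ?_⟩
    · refine MeasurableSet.biUnion (Finset.range (n+1)).countable_toSet ?_
      intro i hi
      exact mF_mono (Finset.subset_biUnion_of_mem Fi hi) _ (hBi i)
    · -- symm diff bound
      have hsub : symmDiff (⋃ i, s i) (⋃ i ∈ Finset.range (n+1), Bi i)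
          ⊆ ((⋃ i, s i) \ Set.accumulate s n) ∪
            ⋃ i ∈ Finset.range (n+1), symmDiff (s i) (Bi i) := by
        intro x hx
        rcases Set.mem_symmDiff.1 hx with ⟨hxs, hxB⟩ | ⟨hxB, hxs⟩
        · by_cases hxa : x ∈ Set.accumulate s n
          · obtain ⟨i, hi, hxi⟩ : ∃ i, i ≤ n ∧ x ∈ s i := by
              rw [Set.accumulate_def] at hxa
              simpa using hxa
            have him : i ∈ Finset.range (n+1) := Finset.mem_range.2 (by omega)
            refine Set.mem_union_right _ (Set.mem_iUnion₂.2 ⟨i, him, ?_⟩)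
            refine Set.mem_symmDiff.2 (Or.inl ⟨hxi, fun hxBi => ?_⟩)
            exact hxB (Set.mem_iUnion₂.2 ⟨i, him, hxBi⟩)
          · exact Set.mem_union_left _ ⟨hxs, hxa⟩
        · obtain ⟨i, hi, hxBi⟩ : ∃ i, i ∈ Finset.range (n+1) ∧ x ∈ Bi i := by
            simpa using Set.mem_iUnion₂.1 hxB
          refine Set.mem_union_right _ (Set.mem_iUnion₂.2 ⟨i, hi, ?_⟩)
          refine Set.mem_symmDiff.2 (Or.inr ⟨hxBi, fun hxsi => ?_⟩)
          exact hxs (Set.mem_iUnion.2 ⟨i, hxsi⟩)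
      calc μ (symmDiff (⋃ i, s i) (⋃ i ∈ Finset.range (n+1), Bi i))
          ≤ μ (((⋃ i, s i) \ Set.accumulate s n) ∪
              ⋃ i ∈ Finset.range (n+1), symmDiff (s i) (Bi i)) := measure_mono hsub
        _ ≤ μ ((⋃ i, s i) \ Set.accumulate s n) +
              μ (⋃ i ∈ Finset.range (n+1), symmDiff (s i) (Bi i)) := measure_union_le _ _
        _ ≤ ε / 2 + ∑ i ∈ Finset.range (n+1), μ (symmDiff (s i) (Bi i)) := by
            exact add_le_add hn (measure_biUnion_finset_le _ _)
        _ ≤ ε / 2 + ∑ _i ∈ Finset.range (n+1), (ε / 2) / (n + 1) := by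
            exact add_le_add_right (Finset.sum_le_sum fun i _ => hdi i) _
        _ ≤ ε / 2 + ε / 2 := by
            apply add_le_add_right
            rw [Finset.sum_const, Finset.card_range, nsmul_eq_mul]
            have : ((n+1 : ℕ) : ℝ≥0∞) = ((n:ℝ≥0∞) + 1) := by push_cast; ring
            rw [this]
            exact ENNReal.mul_div_le
        _ = ε := ENNReal.add_halves ε

lemma approx (hμ : IsBernoulli d p μ) {A : Set (Config d)} (hA : MeasurableSet A) {ε : ℝ≥0∞} (hε : 0 < ε) :
    ∃ F : Finset (Edge d), ∃ B : Set (Config d),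
      MeasurableSet[mF d F] B ∧ μ (symmDiff A B) < ε := by
  haveI : IsProbabilityMeasure μ := hμ.1
  by_cases hεtop : ε = ⊤
  · refine ⟨∅, ∅, @MeasurableSet.empty _ (mF d ∅), ?_⟩
    rw [hεtop]
    exact measure_lt_top μ _
  · obtain ⟨F, B, hB, hd⟩ := approx_aux hμ hA (ε / 2) (ENNReal.div_pos hε.ne' (by norm_num))
    exact ⟨F, B, hB, hd.trans_lt (ENNReal.half_lt_self hε.ne' hεtop)⟩

end Meas


/-! ### Ergodicity of the shift -/

lemma dirVec_apply_self (u : Fin d × Bool) :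
    dirVec d u u.1 = if u.2 then 1 else -1 := by
  unfold dirVec unitVec
  by_cases h : u.2 <;> simp [h, Pi.single_eq_same]

lemma exists_pos_disjoint (F : Finset (Edge d)) (u : Fin d × Bool) :
    ∃ n : ℕ, 0 < n ∧ Disjoint F (F.image (trE d ((n : ℤ) • dirVec d u))) := by
  classical
  set S : ℕ := F.sup (fun b => (b.1 u.1).natAbs) with hS
  refine ⟨2 * S + 1, by omega, ?_⟩
  rw [Finset.disjoint_right]
  rintro b hbim hbF
  obtain ⟨c, hcF, hbc⟩ := Finset.mem_image.1 hbim
  have hb : (b.1 u.1).natAbs ≤ S := Finset.le_sup (f := fun b => (b.1 u.1).natAbs) hbF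
  have hc : (c.1 u.1).natAbs ≤ S := Finset.le_sup (f := fun b => (b.1 u.1).natAbs) hcF
  have hco : b.1 u.1 = ((2 * S + 1 : ℕ) : ℤ) * (if u.2 then 1 else -1) + c.1 u.1 := by
    rw [← hbc]
    show (((2 * S + 1 : ℕ) : ℤ) • dirVec d u + c.1) u.1 = _
    rw [Pi.add_apply, Pi.smul_apply, smul_eq_mul, dirVec_apply_self]
  by_cases h : u.2 <;> simp [h] at hco <;> omega

lemma preimage_mF {F : Finset (Edge d)} {B : Set (Config d)} (x : Site d)
    (hB : MeasurableSet[mF d F] B) :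
    MeasurableSet[mF d (F.image (trE d x))] (shift d x ⁻¹' B) := by
  classical
  have h : @Measurable (Config d) (Config d) (mF d (F.image (trE d x))) (mF d F)
      (shift d x) := by
    refine @measurable_generateFrom _ _ (mF d (F.image (trE d x))) _ _ ?_
    rintro S ⟨s, hs, f, rfl⟩
    rw [shift_preimage_cyl]
    exact MeasurableSpace.measurableSet_generateFrom
      ⟨s.image (trE d x), Finset.image_subset_image hs, _, rfl⟩
  exact h hB

lemma preimage_iterate_inv {f : Config d → Config d} {A : Set (Config d)}
    (h : f ⁻¹' A = A) (n : ℕ) : (f^[n]) ⁻¹' A = A := by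
  induction n with
  | zero => simp
  | succ k ih => rw [Function.iterate_succ, Set.preimage_comp, ih, h]

lemma shift_nsmul_eq_iterate (v : Site d) (n : ℕ) :
    shift d ((n : ℤ) • v) = (shift d v)^[n] := by
  funext ω
  rw [shift_iterate, natCast_zsmul]

section Erg

variable {p : ℝ} {μ : Measure (Config d)}

lemma mu_sq_bound {a b e : ℝ≥0∞} (hb : b ≤ 1) (he : e ≤ 1) (h : a ≤ b + e) :
    a * a ≤ b * b + 3 * e := by
  have h1 : a * a ≤ (b + e) * (b + e) := mul_le_mul' h h
  calc a * a ≤ (b + e) * (b + e) := h1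
    _ = b * b + (b * e + (e * b + e * e)) := by ring
    _ ≤ b * b + (1 * e + (e * 1 + e * 1)) := by gcongr
    _ = b * b + 3 * e := by ring

theorem ergodic_shift (hμ : IsBernoulli d p μ) (u : Fin d × Bool) :
    Ergodic (shift d (dirVec d u)) μ := by
  haveI : IsProbabilityMeasure μ := hμ.1
  refine ⟨measurePreserving_shift hμ _, ⟨?_⟩⟩
  intro A hA hinv
  rw [eventuallyConst_set']
  -- the key quadratic identity
  have key : ∀ ε : ℝ≥0∞, 0 < ε → ε ≤ 1 →
      μ A ≤ μ A * μ A + 5 * ε ∧ μ A * μ A ≤ μ A + 5 * ε := by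
    intro ε hε hε1
    obtain ⟨F, B, hBF, hd⟩ := approx hμ hA hε
    have hd' : μ (symmDiff A B) ≤ ε := hd.le
    have hBmeas : MeasurableSet B := mF_le F _ hBF
    obtain ⟨n, hn, hdisj⟩ := exists_pos_disjoint F u
    set v : Site d := (n : ℤ) • dirVec d u with hv
    set B' : Set (Config d) := shift d v ⁻¹' B with hB'
    have hB'meas : MeasurableSet B' := (measurable_shift v) hBmeas
    have hB'F : MeasurableSet[mF d (F.image (trE d v))] B' := preimage_mF v hBF
    have hAinv : shift d v ⁻¹' A = A := by
      rw [hv, shift_nsmul_eq_iterate]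
      exact preimage_iterate_inv hinv n
    have hmp : MeasurePreserving (shift d v) μ μ := measurePreserving_shift hμ v
    have hB'eq : μ B' = μ B := hmp.measure_preimage hBmeas.nullMeasurableSet
    have hindep : μ (B ∩ B') = μ B * μ B' := indep_apply hμ hdisj hBF hB'F
    have e2 : μ (symmDiff A B') ≤ ε := by
      have : symmDiff A B' = shift d v ⁻¹' (symmDiff A B) := by
        rw [Set.preimage_symmDiff, hAinv]
      rw [this, hmp.measure_preimage]
      · exact hd'
      · exact ((hA.symmDiff hBmeas)).nullMeasurableSet
    have hA1 : μ A ≤ 1 := prob_le_one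
    have hB1 : μ B ≤ 1 := prob_le_one
    -- first inequality
    have inc1 : A ⊆ (B ∩ B') ∪ (symmDiff A B ∪ symmDiff A B') := by
      intro x hx
      by_cases hxB : x ∈ B
      · by_cases hxB' : x ∈ B'
        · exact Or.inl ⟨hxB, hxB'⟩
        · exact Or.inr (Or.inr (Set.mem_symmDiff.2 (Or.inl ⟨hx, hxB'⟩)))
      · exact Or.inr (Or.inl (Set.mem_symmDiff.2 (Or.inl ⟨hx, hxB⟩)))
    have ineq1 : μ A ≤ μ B * μ B + 2 * ε := by
      calc μ A ≤ μ ((B ∩ B') ∪ (symmDiff A B ∪ symmDiff A B')) := measure_mono inc1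
        _ ≤ μ (B ∩ B') + (μ (symmDiff A B) + μ (symmDiff A B')) :=
            le_trans (measure_union_le _ _) (by gcongr; exact measure_union_le _ _)
        _ ≤ μ (B ∩ B') + (ε + ε) := by gcongr
        _ = μ B * μ B + 2 * ε := by rw [hindep, hB'eq]; ring
    -- reverse inequality
    have inc2 : B ∩ B' ⊆ A ∪ symmDiff A B := by
      intro x hx
      by_cases hxA : x ∈ A
      · exact Or.inl hxA
      · exact Or.inr (Set.mem_symmDiff.2 (Or.inr ⟨hx.1, hxA⟩))
    have ineq2 : μ B * μ B ≤ μ A + ε := by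
      calc μ B * μ B = μ (B ∩ B') := by rw [hindep, hB'eq]
        _ ≤ μ A + μ (symmDiff A B) := le_trans (measure_mono inc2) (measure_union_le _ _)
        _ ≤ μ A + ε := by gcongr
    -- relate μ A and μ B
    have hAB : μ A ≤ μ B + ε := by
      calc μ A ≤ μ (B ∪ symmDiff A B) := measure_mono (fun x hx => by
            by_cases hxB : x ∈ B
            · exact Or.inl hxB
            · exact Or.inr (Set.mem_symmDiff.2 (Or.inl ⟨hx, hxB⟩)))
        _ ≤ μ B + μ (symmDiff A B) := measure_union_le _ _
        _ ≤ μ B + ε := by gcongr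
    have hBA : μ B ≤ μ A + ε := by
      calc μ B ≤ μ (A ∪ symmDiff A B) := measure_mono (fun x hx => by
            by_cases hxA : x ∈ A
            · exact Or.inl hxA
            · exact Or.inr (Set.mem_symmDiff.2 (Or.inr ⟨hx, hxA⟩)))
        _ ≤ μ A + μ (symmDiff A B) := measure_union_le _ _
        _ ≤ μ A + ε := by gcongr
    constructor
    · calc μ A ≤ μ B * μ B + 2 * ε := ineq1
        _ ≤ (μ A * μ A + 3 * ε) + 2 * ε := by
            gcongr
            exact mu_sq_bound hA1 hε1 hBA
        _ = μ A * μ A + 5 * ε := by ring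
    · calc μ A * μ A ≤ μ B * μ B + 3 * ε := mu_sq_bound hB1 hε1 hAB
        _ ≤ (μ A + ε) + 3 * ε := by gcongr
        _ = μ A + 4 * ε := by ring
        _ ≤ μ A + 5 * ε := by gcongr <;> norm_num
  have hsq : μ A = μ A * μ A := by
    apply le_antisymm
    · apply ENNReal.le_of_forall_pos_le_add
      intro η hη _
      set e : ℝ≥0∞ := min ((η : ℝ≥0∞) / 5) 1 with he
      have hepos : 0 < e := by
        apply lt_min
        · exact ENNReal.div_pos (by exact_mod_cast hη.ne') (by norm_num)
        · norm_num
      have he1 : e ≤ 1 := min_le_right _ _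
      have h5 : 5 * e ≤ (η : ℝ≥0∞) := by
        calc 5 * e ≤ 5 * ((η : ℝ≥0∞) / 5) := by gcongr; exact min_le_left _ _
          _ ≤ (η : ℝ≥0∞) := ENNReal.mul_div_le
      exact le_trans ((key e hepos he1).1) (by gcongr)
    · apply ENNReal.le_of_forall_pos_le_add
      intro η hη _
      set e : ℝ≥0∞ := min ((η : ℝ≥0∞) / 5) 1 with he
      have hepos : 0 < e := by
        apply lt_min
        · exact ENNReal.div_pos (by exact_mod_cast hη.ne') (by norm_num)
        · norm_num
      have he1 : e ≤ 1 := min_le_right _ _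
      have h5 : 5 * e ≤ (η : ℝ≥0∞) := by
        calc 5 * e ≤ 5 * ((η : ℝ≥0∞) / 5) := by gcongr; exact min_le_left _ _
          _ ≤ (η : ℝ≥0∞) := ENNReal.mul_div_le
      exact le_trans ((key e hepos he1).2) (by gcongr)
  rcases eq_or_ne (μ A) 0 with h0 | h0
  · exact Or.inl (ae_eq_empty.2 h0)
  · refine Or.inr ?_
    have h1 : μ A = 1 := by
      have := hsq
      have hne : μ A ≠ ⊤ := measure_ne_top μ A
      have h2 : μ A * 1 = μ A * μ A := by rw [mul_one]; exact this
      exact ((ENNReal.mul_right_inj h0 hne).1 h2).symm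
    rw [ae_eq_univ]
    rw [measure_compl hA (measure_ne_top μ A), measure_univ, h1, tsub_self]
end Erg


/-! ### The induced transformation: measure preservation and ergodicity -/

section Induced

variable {p : ℝ} {μ : Measure (Config d)} {u : Fin d × Bool}

lemma Nt_spec_nonempty {ω : Config d}
    (h : {k : ℕ | 0 < k ∧ (shift d (dirVec d u))^[k] ω ∈ Omega0 d}.Nonempty) :
    0 < Nt d u ω ∧ (shift d (dirVec d u))^[Nt d u ω] ω ∈ Omega0 d := by
  rw [Nt_eq_sInf]
  exact Nat.sInf_mem h

lemma Nt_eq_zero_iff {ω : Config d} :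
    Nt d u ω = 0 ↔ ∀ k : ℕ, 0 < k → (shift d (dirVec d u))^[k] ω ∉ Omega0 d := by
  rw [Nt_eq_sInf]
  constructor
  · intro h k hk hmem
    rcases Nat.sInf_eq_zero.1 h with h' | h'
    · exact absurd h'.1 (lt_irrefl 0)
    · have : k ∈ {k : ℕ | 0 < k ∧ (shift d (dirVec d u))^[k] ω ∈ Omega0 d} := ⟨hk, hmem⟩
      rw [h'] at this
      exact this
  · intro h
    apply Nat.sInf_eq_zero.2
    right
    ext k
    simp only [Set.mem_setOf_eq, Set.mem_empty_iff_false, iff_false, not_and]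
    exact h k

lemma Nt_eq_iff {ω : Config d} {k : ℕ} (hk : 0 < k) :
    Nt d u ω = k ↔ ((shift d (dirVec d u))^[k] ω ∈ Omega0 d ∧
      ∀ j : ℕ, 0 < j → j < k → (shift d (dirVec d u))^[j] ω ∉ Omega0 d) := by
  set S := {k : ℕ | 0 < k ∧ (shift d (dirVec d u))^[k] ω ∈ Omega0 d} with hS
  constructor
  · intro h
    have hne : S.Nonempty := by
      by_contra hne
      rw [Set.not_nonempty_iff_eq_empty] at hne
      rw [Nt_eq_sInf, ← hS, hne, Nat.sInf_empty] at h
      omega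
    have hmem : Nt d u ω ∈ S := by rw [Nt_eq_sInf, ← hS]; exact Nat.sInf_mem hne
    rw [h] at hmem
    refine ⟨hmem.2, fun j hj0 hjk hjmem => ?_⟩
    have : j ∈ S := ⟨hj0, hjmem⟩
    have := Nat.sInf_le this
    rw [Nt_eq_sInf, ← hS] at h
    omega
  · rintro ⟨hmem, hbelow⟩
    have hkS : k ∈ S := ⟨hk, hmem⟩
    have h1 : sInf S ≤ k := Nat.sInf_le hkS
    have h2 : ¬ sInf S < k := by
      intro hlt
      have hne : S.Nonempty := ⟨k, hkS⟩
      have hm := Nat.sInf_mem hne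
      exact hbelow (sInf S) hm.1 hlt hm.2
    rw [Nt_eq_sInf, ← hS]
    omega

lemma sigma_mem_Omega0 {ω : Config d} (hω : ω ∈ Omega0 d) :
    inducedShift d u ω ∈ Omega0 d := by
  rw [inducedShift_eq]
  by_cases h : {k : ℕ | 0 < k ∧ (shift d (dirVec d u))^[k] ω ∈ Omega0 d}.Nonempty
  · exact (Nt_spec_nonempty h).2
  · rw [Set.not_nonempty_iff_eq_empty] at h
    have : Nt d u ω = 0 := by rw [Nt_eq_sInf, h, Nat.sInf_empty]
    rw [this]
    simpa using hω

/-- Key pointwise lemma: every visit of the `T`-orbit to `Omega0` is an iterate of the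
induced map. -/
lemma reach {ω : Config d} (hω : ω ∈ Omega0 d) :
    ∀ k : ℕ, (shift d (dirVec d u))^[k] ω ∈ Omega0 d →
      ∃ m : ℕ, (inducedShift d u)^[m] ω = (shift d (dirVec d u))^[k] ω := by
  intro k
  induction k using Nat.strong_induction_on with
  | _ k ih =>
    intro hk
    rcases Nat.eq_zero_or_pos k with rfl | hkpos
    · exact ⟨0, rfl⟩
    · classical
      set T := shift d (dirVec d u) with hT
      set Fl := (Finset.range k).filter (fun j => T^[j] ω ∈ Omega0 d) with hFl
      have hne : Fl.Nonempty := ⟨0, by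
        simp only [hFl, Finset.mem_filter, Finset.mem_range]
        exact ⟨hkpos, by simpa using hω⟩⟩
      set j := Fl.max' hne with hj
      have hjmem : j ∈ Fl := Finset.max'_mem Fl hne
      rw [hFl, Finset.mem_filter, Finset.mem_range] at hjmem
      obtain ⟨hjk, hjA⟩ := hjmem
      obtain ⟨m, hm⟩ := ih j hjk hjA
      refine ⟨m + 1, ?_⟩
      rw [Function.iterate_succ_apply', hm]
      -- compute the return time at T^[j] ω
      have hmax : ∀ i : ℕ, j < i → i < k → T^[i] ω ∉ Omega0 d := by
        intro i hji hik hiA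
        have : i ∈ Fl := by
          rw [hFl, Finset.mem_filter, Finset.mem_range]
          exact ⟨hik, hiA⟩
        have := Finset.le_max' Fl i this
        omega
      have hNt : Nt d u (T^[j] ω) = k - j := by
        rw [Nt_eq_iff (by omega)]
        constructor
        · rw [← Function.iterate_add_apply]
          have : k - j + j = k := by omega
          rw [this]
          exact hk
        · intro i hi0 hik hiA
          rw [← Function.iterate_add_apply] at hiA
          exact hmax (i + j) (by omega) (by omega) hiA
      rw [inducedShift_eq, hNt, ← Function.iterate_add_apply]
      have : k - j + j = k := by omega
      rw [this]

/-- Kakutani: the induced map preserves `μ` restricted to `Omega0`. -/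
lemma induced_key (hμ : IsBernoulli d p μ) (u : Fin d × Bool)
    {t : Set (Config d)} (ht : MeasurableSet t) (htA : t ⊆ Omega0 d) :
    μ (Omega0 d ∩ inducedShift d u ⁻¹' t) = μ t := by
  classical
  haveI : IsProbabilityMeasure μ := hμ.1
  set T := shift d (dirVec d u) with hT
  set A := Omega0 d with hA
  have hAmeas : MeasurableSet A := measurableSet_Omega0
  have hTmp : MeasurePreserving T μ μ := measurePreserving_shift hμ _
  have hTmeas : Measurable T := measurable_shift _
  -- the sets D k
  set D : ℕ → Set (Config d) := fun k => Nat.rec t (fun _ Dk => T ⁻¹' Dk \ A) k with hD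
  have hD0 : D 0 = t := rfl
  have hDsucc : ∀ k, D (k + 1) = T ⁻¹' (D k) \ A := fun k => rfl
  have hDmeas : ∀ k, MeasurableSet (D k) := by
    intro k
    induction k with
    | zero => exact ht
    | succ k ihk => rw [hDsucc]; exact (hTmeas ihk).diff hAmeas
  have hDchar : ∀ k (ω : Config d), ω ∈ D k ↔
      (T^[k] ω ∈ t ∧ ∀ j : ℕ, j < k → T^[j] ω ∉ A) := by
    intro k
    induction k with
    | zero => intro ω; simp [hD0]
    | succ k ihk =>
        intro ω
        rw [hDsucc, Set.mem_diff, Set.mem_preimage, ihk (T ω)]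
        constructor
        · rintro ⟨⟨h1, h2⟩, h3⟩
          refine ⟨by rwa [Function.iterate_succ_apply], ?_⟩
          intro j hj
          rcases Nat.eq_zero_or_pos j with rfl | hj0
          · simpa using h3
          · obtain ⟨j', rfl⟩ := Nat.exists_eq_succ_of_ne_zero hj0.ne'
            rw [Function.iterate_succ_apply]
            exact h2 j' (by omega)
        · rintro ⟨h1, h2⟩
          refine ⟨⟨by rwa [← Function.iterate_succ_apply], ?_⟩, by simpa using h2 0 (by omega)⟩
          intro j hj
          rw [← Function.iterate_succ_apply]
          exact h2 (j + 1) (by omega)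
  have hDdisj : Pairwise (Function.onFun Disjoint D) := by
    intro a b hab
    wlog h : a < b generalizing a b
    · exact (this hab.symm (by omega)).symm
    rw [Function.onFun, Set.disjoint_left]
    intro ω hωa hωb
    have h1 := ((hDchar a ω).1 hωa).1
    have h2 := ((hDchar b ω).1 hωb).2 a h
    exact h2 (htA h1)
  have htsum : ∑' k, μ (D k) ≠ ⊤ := by
    rw [← measure_iUnion hDdisj hDmeas]
    exact measure_ne_top μ _
  have hlim : Tendsto (fun n => μ (D n)) atTop (𝓝 0) :=
    ENNReal.tendsto_atTop_zero_of_tsum_ne_top htsum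
  -- the sets G k
  set G : ℕ → Set (Config d) := fun k => A ∩ T ⁻¹' (D k) with hG
  have hGmeas : ∀ k, MeasurableSet (G k) := fun k => hAmeas.inter (hTmeas (hDmeas k))
  have hstep : ∀ k, μ (D k) = μ (G k) + μ (D (k + 1)) := by
    intro k
    have hsplit : T ⁻¹' (D k) = G k ∪ D (k + 1) := by
      rw [hG, hDsucc]
      ext ω
      by_cases hω : ω ∈ A <;> simp [hω]
    have hdisj : Disjoint (G k) (D (k + 1)) := by
      rw [Set.disjoint_left]
      rintro ω ⟨hω, _⟩ hω'
      rw [hDsucc] at hω'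
      exact hω'.2 hω
    calc μ (D k) = μ (T ⁻¹' (D k)) := (hTmp.measure_preimage (hDmeas k).nullMeasurableSet).symm
      _ = μ (G k ∪ D (k + 1)) := by rw [hsplit]
      _ = μ (G k) + μ (D (k + 1)) := measure_union hdisj (hDmeas (k + 1))
  have hpartial : ∀ n, μ t = (∑ k ∈ Finset.range n, μ (G k)) + μ (D n) := by
    intro n
    induction n with
    | zero => simp [hD0]
    | succ n ihn =>
        rw [ihn, hstep n, Finset.sum_range_succ]
        ring
  have htot : μ t = ∑' k, μ (G k) := by
    have h1 : Tendsto (fun n => (∑ k ∈ Finset.range n, μ (G k)) + μ (D n)) atTop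
        (𝓝 ((∑' k, μ (G k)) + 0)) :=
      (ENNReal.tendsto_nat_tsum _).add hlim
    have h2 : Tendsto (fun _ : ℕ => μ t) atTop (𝓝 (μ t)) := tendsto_const_nhds
    have h3 : (fun n => (∑ k ∈ Finset.range n, μ (G k)) + μ (D n)) = fun _ => μ t := by
      funext n; exact (hpartial n).symm
    rw [h3] at h1
    have := tendsto_nhds_unique h2 h1
    rw [this, add_zero]
  -- the sets U k
  set σ := inducedShift d u with hσ
  have hσmeas : Measurable σ := measurable_inducedShift
  set U : ℕ → Set (Config d) := fun k => A ∩ (Nt d u ⁻¹' {k}) ∩ σ ⁻¹' t with hU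
  have hUmeas : ∀ k, MeasurableSet (U k) :=
    fun k => (hAmeas.inter (measurable_Nt (measurableSet_singleton k))).inter (hσmeas ht)
  have hUdisj : Pairwise (Function.onFun Disjoint U) := by
    intro a b hab
    rw [Function.onFun, Set.disjoint_left]
    rintro ω ⟨⟨_, ha⟩, _⟩ ⟨⟨_, hb⟩, _⟩
    rw [Set.mem_preimage, Set.mem_singleton_iff] at ha hb
    exact hab (ha ▸ hb ▸ rfl)
  have hUnion : A ∩ σ ⁻¹' t = ⋃ k, U k := by
    ext ω
    simp only [hU, Set.mem_iUnion, Set.mem_inter_iff, Set.mem_preimage, Set.mem_singleton_iff]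
    constructor
    · rintro ⟨h1, h2⟩
      exact ⟨Nt d u ω, ⟨h1, rfl⟩, h2⟩
    · rintro ⟨k, ⟨h1, _⟩, h2⟩
      exact ⟨h1, h2⟩
  -- U 0 is null (Poincaré)
  have hU0 : μ (U 0) = 0 := by
    have hcons : MeasureTheory.Conservative T μ := hTmp.conservative
    have hnull := hcons.measure_mem_forall_ge_image_notMem_eq_zero
      hAmeas.nullMeasurableSet 1
    refine measure_mono_null ?_ hnull
    rintro ω ⟨⟨hωA, hN0⟩, _⟩
    rw [Set.mem_preimage, Set.mem_singleton_iff] at hN0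
    refine ⟨hωA, fun m hm hmem => ?_⟩
    exact (Nt_eq_zero_iff.1 hN0) m (by omega) hmem
  -- U (k+1) = G k
  have hUG : ∀ k, U (k + 1) = G k := by
    intro k
    ext ω
    simp only [hU, hG, Set.mem_inter_iff, Set.mem_preimage, Set.mem_singleton_iff]
    constructor
    · rintro ⟨⟨hωA, hN⟩, hσt⟩
      have hNiff := (Nt_eq_iff (u := u) (ω := ω) (k := k + 1) (by omega)).1 hN
      refine ⟨hωA, ?_⟩
      rw [hDchar k (T ω)]
      constructor
      · rw [← Function.iterate_succ_apply]
        rw [hσ, inducedShift_eq, hN] at hσt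
        exact hσt
      · intro j hj
        rw [← Function.iterate_succ_apply]
        rcases Nat.eq_zero_or_pos j with rfl | hj0
        · exact hNiff.2 1 (by omega) (by omega)
        · exact hNiff.2 (j + 1) (by omega) (by omega)
    · rintro ⟨hωA, hTD⟩
      rw [hDchar k (T ω)] at hTD
      obtain ⟨h1, h2⟩ := hTD
      rw [← Function.iterate_succ_apply] at h1
      have hN : Nt d u ω = k + 1 := by
        rw [Nt_eq_iff (by omega)]
        refine ⟨htA h1, ?_⟩
        intro j hj0 hjk
        obtain ⟨j', rfl⟩ := Nat.exists_eq_succ_of_ne_zero hj0.ne'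
        rw [Function.iterate_succ_apply]
        exact h2 j' (by omega)
      exact ⟨⟨hωA, hN⟩, by
        rw [hσ, inducedShift_eq, hN]
        exact h1⟩
  -- put it together
  calc μ (A ∩ σ ⁻¹' t) = μ (⋃ k, U k) := by rw [hUnion]
    _ = ∑' k, μ (U k) := measure_iUnion hUdisj hUmeas
    _ = μ (U 0) + ∑' k, μ (U (k + 1)) := tsum_eq_zero_add' ENNReal.summable
    _ = ∑' k, μ (G k) := by
        rw [hU0, zero_add]
        congr 1
        funext k
        rw [hUG k]
    _ = μ t := htot.symm

end Induced


section Final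

variable {p : ℝ} {μ : Measure (Config d)} {u : Fin d × Bool}

lemma P0_apply (μ : Measure (Config d)) (t : Set (Config d)) :
    P0 d μ t = (μ (Omega0 d))⁻¹ * μ (Omega0 d ∩ t) :=
  ProbabilityTheory.cond_apply measurableSet_Omega0 μ t

lemma induced_measurePreserving (hμ : IsBernoulli d p μ) (u : Fin d × Bool) :
    MeasurePreserving (inducedShift d u) (P0 d μ) (P0 d μ) := by
  haveI : IsProbabilityMeasure μ := hμ.1
  refine ⟨measurable_inducedShift, ?_⟩
  rcases eq_or_ne (μ (Omega0 d)) 0 with h0 | h0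
  · have hz : P0 d μ = 0 := by
      unfold P0 ProbabilityTheory.cond
      rw [Measure.restrict_eq_zero.2 h0]
      simp
    rw [hz, Measure.map_zero]
  · apply Measure.ext
    intro t ht
    rw [Measure.map_apply measurable_inducedShift ht, P0_apply, P0_apply]
    congr 1
    have h1 : Omega0 d ∩ inducedShift d u ⁻¹' t
        = Omega0 d ∩ inducedShift d u ⁻¹' (t ∩ Omega0 d) := by
      ext ω
      simp only [Set.mem_inter_iff, Set.mem_preimage]
      constructor
      · rintro ⟨hωA, hωt⟩
        exact ⟨hωA, hωt, sigma_mem_Omega0 hωA⟩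
      · rintro ⟨hωA, hωt, _⟩
        exact ⟨hωA, hωt⟩
    rw [h1, induced_key hμ u (ht.inter measurableSet_Omega0) Set.inter_subset_right,
      Set.inter_comm]

theorem induced_ergodic (hμ : IsBernoulli d p μ) (u : Fin d × Bool) :
    Ergodic (inducedShift d u) (P0 d μ) := by
  haveI : IsProbabilityMeasure μ := hμ.1
  refine ⟨induced_measurePreserving hμ u, ⟨?_⟩⟩
  intro s hs hinv
  rw [eventuallyConst_set']
  have hAmeas : MeasurableSet (Omega0 d) := measurableSet_Omega0
  rcases eq_or_ne (μ (Omega0 d ∩ s)) 0 with h0 | h0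
  · exact Or.inl (ae_eq_empty.2 (by rw [P0_apply, h0, mul_zero]))
  · refine Or.inr (ae_eq_univ.2 ?_)
    set T := shift d (dirVec d u) with hT
    have hTmeas : Measurable T := measurable_shift _
    set B := s ∩ Omega0 d with hB
    have hBmeas : MeasurableSet B := hs.inter hAmeas
    set E := ⋃ k : ℕ, (T^[k]) ⁻¹' B with hE
    have hEmeas : MeasurableSet E :=
      MeasurableSet.iUnion fun k => (hTmeas.iterate k) hBmeas
    have hTE : T ⁻¹' E ⊆ E := by
      intro x hx
      rw [Set.mem_preimage, hE] at hx
      obtain ⟨k, hk⟩ := Set.mem_iUnion.1 hx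
      rw [Set.mem_preimage] at hk
      refine Set.mem_iUnion.2 ⟨k + 1, ?_⟩
      rw [Set.mem_preimage, Function.iterate_succ_apply]
      exact hk
    have hErg := ergodic_shift hμ u
    rcases hErg.ae_empty_or_univ_of_preimage_ae_le hEmeas.nullMeasurableSet
        (HasSubset.Subset.eventuallyLE hTE) with hemp | huniv
    · exfalso
      have hBE : B ⊆ E := fun x hx => Set.mem_iUnion.2 ⟨0, hx⟩
      have hEz : μ E = 0 := ae_eq_empty.1 hemp
      have : μ (Omega0 d ∩ s) = 0 := by
        rw [Set.inter_comm]
        exact measure_mono_null (hBE.trans' fun x hx => hx) hEz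
      exact h0 this
    · have hEc : μ Eᶜ = 0 := ae_eq_univ.1 huniv
      have hsub : Omega0 d ∩ sᶜ ⊆ Eᶜ := by
        rintro ω ⟨hωA, hωs⟩ hωE
        obtain ⟨k, hk⟩ := Set.mem_iUnion.1 hωE
        rw [Set.mem_preimage] at hk
        obtain ⟨m, hm⟩ := reach hωA k hk.2
        have hmem : (inducedShift d u)^[m] ω ∈ s := by rw [hm]; exact hk.1
        have : ω ∈ s := by
          have hpre : (inducedShift d u)^[m] ⁻¹' s = s := preimage_iterate_inv hinv m
          rw [← hpre]
          exact hmem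
        exact hωs this
      rw [P0_apply]
      rw [measure_mono_null hsub hEc, mul_zero]

end Final

/-- Theorem 3.2: the induced shift `σ_e` preserves `ℙ₀` and is
ergodic with respect to `ℙ₀`. -/
theorem induced_shift_ergodic
    (d : ℕ) (hd : 2 ≤ d) (p : ℝ) (hp0 : 0 < p) (hp1 : p < 1) (hpc : pc d < p)
    (μ : Measure (Config d)) (hμ : IsBernoulli d p μ) (u : Fin d × Bool) :
    Ergodic (inducedShift d u) (P0 d μ) :=
  induced_ergodic hμ u

end QIP
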